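/- arXiv:2107.04105 — 2 statements merged into one kernel-verified Lean document; each statement's English description precedes it below -/
import Mathlib

section
/- Let A be the quotient of ℂ[x₀,x₁,x₂,x₃,y₀,y₁,y₂,y₃] by the ideal generated by x₀y₀−7x₁y₁+4x₂y₂+2x₃y₃, x₀y₀−6x₁y₁+2x₂y₂+3x₃y₃ and x₀y₀−x₁y₁−7x₂y₂+7x₃y₃, and let ψ : ℂ[w₀,…,w₆] → A be the ℂ-algebra homomorphism determined by w₀ ↦ x₃y₃, w₁ ↦ x₀y₁+x₁y₀, w₂ ↦ x₀y₂+x₂y₀, w₃ ↦ x₀y₃+x₃y₀, w₄ ↦ x₁y₂+x₂y₁, w₅ ↦ x₁y₃+x₃y₁, w₆ ↦ x₂y₃+x₃y₂. Then the only homogeneous polynomial of degree 2 in the kernel of ψ is the zero polynomial; that is, the threefold W_{BS}⁶ ⊂ ℙ⁶ is not contained in any quadric hypersurface. -/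
set_option maxHeartbeats 1000000

open MvPolynomial

/-- The ideal of ℂ[x₀,…,x₃,y₀,…,y₃] (variables `X 0,…,X 3` are x₀,…,x₃ and
`X 4,…,X 7` are y₀,…,y₃) generated by the three symmetric (1,1)-forms
x₀y₀−7x₁y₁+4x₂y₂+2x₃y₃, x₀y₀−6x₁y₁+2x₂y₂+3x₃y₃, x₀y₀−x₁y₁−7x₂y₂+7x₃y₃. -/
noncomputable def I6 : Ideal (MvPolynomial (Fin 8) ℂ) :=
  Ideal.span {X 0 * X 4 - 7 * (X 1 * X 5) + 4 * (X 2 * X 6) + 2 * (X 3 * X 7),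
    X 0 * X 4 - 6 * (X 1 * X 5) + 2 * (X 2 * X 6) + 3 * (X 3 * X 7),
    X 0 * X 4 - X 1 * X 5 - 7 * (X 2 * X 6) + 7 * (X 3 * X 7)}

/-- The ℂ-algebra homomorphism ψ : ℂ[w₀,…,w₆] → A = ℂ[x,y]/I6 determined by
w₀ ↦ x₃y₃, w₁ ↦ x₀y₁+x₁y₀, w₂ ↦ x₀y₂+x₂y₀, w₃ ↦ x₀y₃+x₃y₀, w₄ ↦ x₁y₂+x₂y₁,
w₅ ↦ x₁y₃+x₃y₁, w₆ ↦ x₂y₃+x₃y₂ (mod I6). -/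
noncomputable def psi : MvPolynomial (Fin 7) ℂ →ₐ[ℂ] (MvPolynomial (Fin 8) ℂ ⧸ I6) :=
  aeval fun i => Ideal.Quotient.mk I6
    (![X 3 * X 7, X 0 * X 5 + X 1 * X 4, X 0 * X 6 + X 2 * X 4,
       X 0 * X 7 + X 3 * X 4, X 1 * X 6 + X 2 * X 5, X 1 * X 7 + X 3 * X 5,
       X 2 * X 7 + X 3 * X 6] i)

lemma pair_inj_dec : ∀ i j k l : Fin 7, i ≤ j → k ≤ l →
    (∀ a : Fin 7, (if i = a then (1:ℕ) else 0) + (if j = a then 1 else 0)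
      = (if k = a then 1 else 0) + (if l = a then 1 else 0)) → i = k ∧ j = l := by decide

lemma pair_inj (i j k l : Fin 7) (hij : i ≤ j) (hkl : k ≤ l)
    (h : Finsupp.single i 1 + Finsupp.single j 1
       = Finsupp.single k 1 + Finsupp.single l 1) : i = k ∧ j = l := by
  apply pair_inj_dec i j k l hij hkl
  intro a
  have hh := DFunLike.congr_fun h a
  simpa [Finsupp.add_apply, Finsupp.single_apply] using hh

lemma hXX (i j : Fin 7) : (X i * X j : MvPolynomial (Fin 7) ℂ)
    = monomial (Finsupp.single i 1 + Finsupp.single j 1) 1 := by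
  rw [X, X, monomial_mul, one_mul]

lemma classify (e : Fin 7 →₀ ℕ) (h : ∑ i : Fin 7, e i = 2) :
    ∃ i j : Fin 7, i ≤ j ∧ e = Finsupp.single i 1 + Finsupp.single j 1 := by
  obtain ⟨i, -, hi⟩ : ∃ i ∈ Finset.univ, e i ≠ 0 := by
    apply Finset.exists_ne_zero_of_sum_ne_zero; omega
  have hsplit : e i + ∑ a ∈ Finset.univ.erase i, e a = 2 := by
    rw [Finset.add_sum_erase _ _ (Finset.mem_univ i)]; exact h
  have hi2 : e i = 1 ∨ e i = 2 := by omega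
  rcases hi2 with hi1 | hi2
  · have hrest : ∑ a ∈ Finset.univ.erase i, e a = 1 := by omega
    obtain ⟨j, hjmem, hj⟩ : ∃ j ∈ Finset.univ.erase i, e j ≠ 0 := by
      apply Finset.exists_ne_zero_of_sum_ne_zero; omega
    have hji : j ≠ i := (Finset.mem_erase.mp hjmem).1
    have hsplit2 : e j + ∑ a ∈ (Finset.univ.erase i).erase j, e a = 1 := by
      rw [Finset.add_sum_erase _ _ hjmem]; exact hrest
    have hj1 : e j = 1 := by omega
    have hz : ∀ a, a ≠ i → a ≠ j → e a = 0 := by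
      intro a hai haj
      have h0 : ∑ a ∈ (Finset.univ.erase i).erase j, e a = 0 := by omega
      exact Finset.sum_eq_zero_iff.mp h0 a (by simp [hai, haj])
    have hee : e = Finsupp.single i 1 + Finsupp.single j 1 := by
      ext a
      simp only [Finsupp.add_apply, Finsupp.single_apply]
      rcases eq_or_ne a i with rfl | hai
      · simp [hi1, hji]
      · rcases eq_or_ne a j with rfl | haj
        · simp [hj1, Ne.symm hai]
        · simp [hz a hai haj, Ne.symm hai, Ne.symm haj]
    rcases le_total i j with hij | hij
    · exact ⟨i, j, hij, hee⟩
    · exact ⟨j, i, hij, by rw [add_comm]; exact hee⟩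
  · refine ⟨i, i, le_refl _, ?_⟩
    have hz : ∀ a, a ≠ i → e a = 0 := by
      intro a hai
      have h0 : ∑ a ∈ Finset.univ.erase i, e a = 0 := by omega
      exact Finset.sum_eq_zero_iff.mp h0 a (by simp [hai])
    ext a
    simp only [Finsupp.add_apply, Finsupp.single_apply]
    rcases eq_or_ne a i with rfl | hai
    · simp [hi2]
    · simp [hz a hai, Ne.symm hai]

lemma master (f : MvPolynomial (Fin 7) ℂ) (hf : f.IsHomogeneous 2) :
    f = ∑ p ∈ Finset.univ.filter (fun p : Fin 7 × Fin 7 => p.1 ≤ p.2),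
        C (coeff (Finsupp.single p.1 1 + Finsupp.single p.2 1) f) * (X p.1 * X p.2) := by
  apply MvPolynomial.ext
  intro e
  rw [MvPolynomial.coeff_sum]
  simp only [hXX, coeff_C_mul, coeff_monomial]
  by_cases he : ∃ i j : Fin 7, i ≤ j ∧ e = Finsupp.single i 1 + Finsupp.single j 1
  · obtain ⟨i, j, hij, rfl⟩ := he
    rw [Finset.sum_eq_single (i, j)]
    · simp
    · rintro ⟨k, l⟩ hkl hne
      simp only [Finset.mem_filter] at hkl
      have hne2 : ¬ (Finsupp.single k 1 + Finsupp.single l 1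
          = Finsupp.single i 1 + Finsupp.single j 1) := by
        intro hh
        obtain ⟨rfl, rfl⟩ := pair_inj k l i j hkl.2 hij hh
        exact hne rfl
      simp [hne2]
    · intro hmem
      exact absurd (Finset.mem_filter.mpr ⟨Finset.mem_univ (i, j), hij⟩) hmem
  · have h0 : coeff e f = 0 := by
      by_contra hne
      have hdeg : ∑ i : Fin 7, e i = 2 := by
        have := hf hne
        simpa [Finsupp.weight_apply, Finsupp.sum_fintype, smul_eq_mul] using this
      obtain ⟨i, j, hij, rfl⟩ := classify e hdeg
      exact he ⟨i, j, hij, rfl⟩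
    rw [h0]
    symm
    apply Finset.sum_eq_zero
    rintro ⟨k, l⟩ hkl
    have hne2 : ¬ (Finsupp.single k 1 + Finsupp.single l 1 = e) := fun hh =>
      he ⟨k, l, (Finset.mem_filter.mp hkl).2, hh.symm⟩
    simp [hne2]

/-- Lifts to `MvPolynomial (Fin 8) ℂ` of the seven quadrics defining ψ. -/
noncomputable def Wv : Fin 7 → MvPolynomial (Fin 8) ℂ :=
  ![X 3 * X 7, X 0 * X 5 + X 1 * X 4, X 0 * X 6 + X 2 * X 4,
    X 0 * X 7 + X 3 * X 4, X 1 * X 6 + X 2 * X 5, X 1 * X 7 + X 3 * X 5,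
    X 2 * X 7 + X 3 * X 6]

lemma key (f : MvPolynomial (Fin 7) ℂ)
    (hev : ∀ p : Fin 7 → ℂ, (aeval p) f = coeff (Finsupp.single 0 1 + Finsupp.single 0 1) f * (p 0 * p 0) + coeff (Finsupp.single 0 1 + Finsupp.single 1 1) f * (p 0 * p 1) + coeff (Finsupp.single 0 1 + Finsupp.single 2 1) f * (p 0 * p 2) + coeff (Finsupp.single 0 1 + Finsupp.single 3 1) f * (p 0 * p 3) + coeff (Finsupp.single 0 1 + Finsupp.single 4 1) f * (p 0 * p 4) + coeff (Finsupp.single 0 1 + Finsupp.single 5 1) f * (p 0 * p 5) + coeff (Finsupp.single 0 1 + Finsupp.single 6 1) f * (p 0 * p 6) + coeff (Finsupp.single 1 1 + Finsupp.single 1 1) f * (p 1 * p 1) + coeff (Finsupp.single 1 1 + Finsupp.single 2 1) f * (p 1 * p 2) + coeff (Finsupp.single 1 1 + Finsupp.single 3 1) f * (p 1 * p 3) + coeff (Finsupp.single 1 1 + Finsupp.single 4 1) f * (p 1 * p 4) + coeff (Finsupp.single 1 1 + Finsupp.single 5 1) f * (p 1 * p 5) + coeff (Finsupp.single 1 1 +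 Finsupp.single 6 1) f * (p 1 * p 6) + coeff (Finsupp.single 2 1 + Finsupp.single 2 1) f * (p 2 * p 2) + coeff (Finsupp.single 2 1 + Finsupp.single 3 1) f * (p 2 * p 3) + coeff (Finsupp.single 2 1 + Finsupp.single 4 1) f * (p 2 * p 4) + coeff (Finsupp.single 2 1 + Finsupp.single 5 1) f * (p 2 * p 5) + coeff (Finsupp.single 2 1 + Finsupp.single 6 1) f * (p 2 * p 6) + coeff (Finsupp.single 3 1 + Finsupp.single 3 1) f * (p 3 * p 3) + coeff (Finsupp.single 3 1 + Finsupp.single 4 1) f * (p 3 * p 4) + coeff (Finsupp.single 3 1 + Finsupp.single 5 1) f * (p 3 * p 5) + coeff (Finsupp.single 3 1 + Finsupp.single 6 1) f * (p 3 * p 6) + coeff (Finsupp.single 4 1 + Finsupp.single 4 1) f * (p 4 * p 4) + coeff (Finsupp.single 4 1 + Finsupp.single 5 1) f * (p 4 * p 5) + coeff (Finsupp.single 4 1 + Finsupp.single 6 1) f * (p 4 * p 6) + coeff (Finsupp.single 5 1 + Finsupp.single 5 1) f * (p 5 * p 5) + coeff (Finsupp.single 5 1 + Finsupp.single 6 1)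 f * (p 5 * p 6) + coeff (Finsupp.single 6 1 + Finsupp.single 6 1) f * (p 6 * p 6))
    (hmem : (aeval Wv) f ∈ I6)
    (a0 a1 a2 a3 b0 b1 b2 b3 : ℂ)
    (h1 : a0*b0 - 7*(a1*b1) + 4*(a2*b2) + 2*(a3*b3) = 0)
    (h2 : a0*b0 - 6*(a1*b1) + 2*(a2*b2) + 3*(a3*b3) = 0)
    (h3 : a0*b0 - a1*b1 - 7*(a2*b2) + 7*(a3*b3) = 0) :
    coeff (Finsupp.single 0 1 + Finsupp.single 0 1) f * ((a3*b3) * (a3*b3)) + coeff (Finsupp.single 0 1 + Finsupp.single 1 1) f * ((a3*b3) * (a0*b1+a1*b0)) + coeff (Finsupp.single 0 1 + Finsupp.single 2 1) f * ((a3*b3) * (a0*b2+a2*b0)) + coeff (Finsupp.single 0 1 + Finsupp.single 3 1) f * ((a3*b3) * (a0*b3+a3*b0)) + coeff (Finsupp.single 0 1 + Finsupp.single 4 1) f * ((a3*b3) * (a1*b2+a2*b1)) + coeff (Finsupp.single 0 1 + Finsupp.single 5 1) f * ((a3*b3) * (a1*b3+a3*b1)) + coeff (Finsupp.single 0 1 +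 Finsupp.single 6 1) f * ((a3*b3) * (a2*b3+a3*b2)) + coeff (Finsupp.single 1 1 + Finsupp.single 1 1) f * ((a0*b1+a1*b0) * (a0*b1+a1*b0)) + coeff (Finsupp.single 1 1 + Finsupp.single 2 1) f * ((a0*b1+a1*b0) * (a0*b2+a2*b0)) + coeff (Finsupp.single 1 1 + Finsupp.single 3 1) f * ((a0*b1+a1*b0) * (a0*b3+a3*b0)) + coeff (Finsupp.single 1 1 + Finsupp.single 4 1) f * ((a0*b1+a1*b0) * (a1*b2+a2*b1)) + coeff (Finsupp.single 1 1 + Finsupp.single 5 1) f * ((a0*b1+a1*b0) * (a1*b3+a3*b1)) + coeff (Finsupp.single 1 1 + Finsupp.single 6 1) f * ((a0*b1+a1*b0) * (a2*b3+a3*b2)) + coeff (Finsupp.single 2 1 + Finsupp.single 2 1) f * ((a0*b2+a2*b0) * (a0*b2+a2*b0)) + coeff (Finsupp.single 2 1 + Finsupp.single 3 1) f * ((a0*b2+a2*b0) * (a0*b3+a3*b0)) + coeff (Finsupp.single 2 1 + Finsupp.single 4 1) f * ((a0*b2+a2*b0) * (a1*b2+a2*b1)) + coeff (Finsupp.single 2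 1 + Finsupp.single 5 1) f * ((a0*b2+a2*b0) * (a1*b3+a3*b1)) + coeff (Finsupp.single 2 1 + Finsupp.single 6 1) f * ((a0*b2+a2*b0) * (a2*b3+a3*b2)) + coeff (Finsupp.single 3 1 + Finsupp.single 3 1) f * ((a0*b3+a3*b0) * (a0*b3+a3*b0)) + coeff (Finsupp.single 3 1 + Finsupp.single 4 1) f * ((a0*b3+a3*b0) * (a1*b2+a2*b1)) + coeff (Finsupp.single 3 1 + Finsupp.single 5 1) f * ((a0*b3+a3*b0) * (a1*b3+a3*b1)) + coeff (Finsupp.single 3 1 + Finsupp.single 6 1) f * ((a0*b3+a3*b0) * (a2*b3+a3*b2)) + coeff (Finsupp.single 4 1 + Finsupp.single 4 1) f * ((a1*b2+a2*b1) * (a1*b2+a2*b1)) + coeff (Finsupp.single 4 1 + Finsupp.single 5 1) f * ((a1*b2+a2*b1) * (a1*b3+a3*b1)) + coeff (Finsupp.single 4 1 + Finsupp.single 6 1) f * ((a1*b2+a2*b1) * (a2*b3+a3*b2)) + coeff (Finsupp.single 5 1 + Finsupp.single 5 1) f * ((a1*b3+a3*b1) * (a1*b3+a3*b1)) + coeff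 (Finsupp.single 5 1 + Finsupp.single 6 1) f * ((a1*b3+a3*b1) * (a2*b3+a3*b2)) + coeff (Finsupp.single 6 1 + Finsupp.single 6 1) f * ((a2*b3+a3*b2) * (a2*b3+a3*b2)) = 0 := by
  have hle : I6 ≤ RingHom.ker (aeval (![a0,a1,a2,a3,b0,b1,b2,b3] : Fin 8 → ℂ)
      : MvPolynomial (Fin 8) ℂ →ₐ[ℂ] ℂ).toRingHom := by
    rw [I6, Ideal.span_le]
    rintro g hg
    simp only [Set.mem_insert_iff, Set.mem_singleton_iff] at hg
    rcases hg with rfl | rfl | rfl <;>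
      (simp only [SetLike.mem_coe, RingHom.mem_ker, AlgHom.toRingHom_eq_coe, RingHom.coe_coe,
        map_sub, map_add, map_mul, map_ofNat, aeval_X]
       first | exact h1 | exact h2 | exact h3)
  have h0 : (aeval (![a0,a1,a2,a3,b0,b1,b2,b3] : Fin 8 → ℂ)) ((aeval Wv) f) = 0 := hle hmem
  rw [MvPolynomial.comp_aeval_apply] at h0
  have hw : (fun j => (aeval (![a0,a1,a2,a3,b0,b1,b2,b3] : Fin 8 → ℂ)) (Wv j)) = (![a3*b3, a0*b1+a1*b0, a0*b2+a2*b0, a0*b3+a3*b0, a1*b2+a2*b1, a1*b3+a3*b1, a2*b3+a3*b2] : Fin 7 → ℂ) := by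
    funext j
    fin_cases j
    · show (aeval (![a0,a1,a2,a3,b0,b1,b2,b3] : Fin 8 → ℂ)) (X 3 * X 7) = _
      simp only [map_mul, aeval_X]; rfl
    · show (aeval (![a0,a1,a2,a3,b0,b1,b2,b3] : Fin 8 → ℂ)) (X 0 * X 5 + X 1 * X 4) = _
      simp only [map_add, map_mul, aeval_X]; rfl
    · show (aeval (![a0,a1,a2,a3,b0,b1,b2,b3] : Fin 8 → ℂ)) (X 0 * X 6 + X 2 * X 4) = _
      simp only [map_add, map_mul, aeval_X]; rfl
    · show (aeval (![a0,a1,a2,a3,b0,b1,b2,b3] : Fin 8 → ℂ)) (X 0 * X 7 + X 3 * X 4) = _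
      simp only [map_add, map_mul, aeval_X]; rfl
    · show (aeval (![a0,a1,a2,a3,b0,b1,b2,b3] : Fin 8 → ℂ)) (X 1 * X 6 + X 2 * X 5) = _
      simp only [map_add, map_mul, aeval_X]; rfl
    · show (aeval (![a0,a1,a2,a3,b0,b1,b2,b3] : Fin 8 → ℂ)) (X 1 * X 7 + X 3 * X 5) = _
      simp only [map_add, map_mul, aeval_X]; rfl
    · show (aeval (![a0,a1,a2,a3,b0,b1,b2,b3] : Fin 8 → ℂ)) (X 2 * X 7 + X 3 * X 6) = _
      simp only [map_add, map_mul, aeval_X]; rfl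
  rw [hw, hev] at h0
  convert h0 using 2 <;> rfl

set_option maxHeartbeats 10000000 in
/-- The only homogeneous polynomial of degree 2 in the kernel of ψ is the zero
polynomial; i.e., the threefold W_{BS}⁶ ⊂ ℙ⁶ is not contained in any quadric
hypersurface. -/
theorem WBS6_not_contained_in_quadric :
    ∀ f : MvPolynomial (Fin 7) ℂ, f ∈ RingHom.ker psi → f.IsHomogeneous 2 → f = 0 := by
  intro f hker hhom
  have hpsi : psi = aeval fun i => (Ideal.Quotient.mkₐ ℂ I6) (Wv i) := rfl
  have hmem : (aeval Wv) f ∈ I6 := by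
    have h0 : psi f = 0 := hker
    rw [hpsi, ← MvPolynomial.comp_aeval_apply, Ideal.Quotient.mkₐ_eq_mk] at h0
    exact Ideal.Quotient.eq_zero_iff_mem.mp h0
  have hev : ∀ p : Fin 7 → ℂ, (aeval p) f = coeff (Finsupp.single 0 1 + Finsupp.single 0 1) f * (p 0 * p 0) + coeff (Finsupp.single 0 1 + Finsupp.single 1 1) f * (p 0 * p 1) + coeff (Finsupp.single 0 1 + Finsupp.single 2 1) f * (p 0 * p 2) + coeff (Finsupp.single 0 1 + Finsupp.single 3 1) f * (p 0 * p 3) + coeff (Finsupp.single 0 1 + Finsupp.single 4 1) f * (p 0 * p 4) + coeff (Finsupp.single 0 1 + Finsupp.single 5 1) f * (p 0 * p 5) + coeff (Finsupp.single 0 1 + Finsupp.single 6 1) f * (p 0 * p 6) + coeff (Finsupp.single 1 1 + Finsupp.single 1 1) f * (p 1 * p 1) + coeff (Finsupp.single 1 1 + Finsupp.single 2 1) f * (p 1 * p 2) + coeff (Finsupp.single 1 1 + Finsupp.single 3 1) f * (p 1 * p 3) + coeff (Finsupp.single 1 1 + Finsupp.single 4 1) f * (p 1 * p 4) + coeff (Finsupp.single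 1 1 + Finsupp.single 5 1) f * (p 1 * p 5) + coeff (Finsupp.single 1 1 + Finsupp.single 6 1) f * (p 1 * p 6) + coeff (Finsupp.single 2 1 + Finsupp.single 2 1) f * (p 2 * p 2) + coeff (Finsupp.single 2 1 + Finsupp.single 3 1) f * (p 2 * p 3) + coeff (Finsupp.single 2 1 + Finsupp.single 4 1) f * (p 2 * p 4) + coeff (Finsupp.single 2 1 + Finsupp.single 5 1) f * (p 2 * p 5) + coeff (Finsupp.single 2 1 + Finsupp.single 6 1) f * (p 2 * p 6) + coeff (Finsupp.single 3 1 + Finsupp.single 3 1) f * (p 3 * p 3) + coeff (Finsupp.single 3 1 + Finsupp.single 4 1) f * (p 3 * p 4) + coeff (Finsupp.single 3 1 + Finsupp.single 5 1) f * (p 3 * p 5) + coeff (Finsupp.single 3 1 + Finsupp.single 6 1) f * (p 3 * p 6) + coeff (Finsupp.single 4 1 + Finsupp.single 4 1) f * (p 4 * p 4) + coeff (Finsupp.single 4 1 + Finsupp.single 5 1) f * (p 4 * p 5) + coeff (Finsupp.single 4 1 + Finsupp.single 6 1) f * (p 4 * p 6) + coeff (Finsupp.single 5 1 + Finsupp.single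 5 1) f * (p 5 * p 5) + coeff (Finsupp.single 5 1 + Finsupp.single 6 1) f * (p 5 * p 6) + coeff (Finsupp.single 6 1 + Finsupp.single 6 1) f * (p 6 * p 6) := by
    intro p
    conv_lhs => rw [master f hhom]
    rw [map_sum, Finset.sum_filter, Fintype.sum_prod_type]
    simp only [Fin.sum_univ_seven, map_mul, map_add, aeval_C, aeval_X]
    simp (config := { decide := true }) only [if_true, if_false]
    simp only [Algebra.algebraMap_self, RingHom.id_apply]
    ring
  have hq0_0 := key f hev hmem (0 : ℂ) (-1 : ℂ) (1 : ℂ) (-1 : ℂ) (1 : ℂ) (0 : ℂ) (0 : ℂ) (0 : ℂ) (by norm_num) (by norm_num) (by norm_num)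
  have hq0_1 := key f hev hmem (0 : ℂ) (1 : ℂ) (2 : ℂ) (-2 : ℂ) (-4 : ℂ) (0 : ℂ) (0 : ℂ) (0 : ℂ) (by norm_num) (by norm_num) (by norm_num)
  have hq0_2 := key f hev hmem (0 : ℂ) (1 : ℂ) (1 : ℂ) (-1 : ℂ) (-1 : ℂ) (0 : ℂ) (0 : ℂ) (0 : ℂ) (by norm_num) (by norm_num) (by norm_num)
  have hq0_3 := key f hev hmem (0 : ℂ) (1 : ℂ) (-1 : ℂ) (-2 : ℂ) (2 : ℂ) (0 : ℂ) (0 : ℂ) (0 : ℂ) (by norm_num) (by norm_num) (by norm_num)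
  have hq0_4 := key f hev hmem (0 : ℂ) (-1 : ℂ) (2 : ℂ) (1 : ℂ) (-2 : ℂ) (0 : ℂ) (0 : ℂ) (0 : ℂ) (by norm_num) (by norm_num) (by norm_num)
  have hq0_5 := key f hev hmem (0 : ℂ) (-1 : ℂ) (1 : ℂ) (1 : ℂ) (-1 : ℂ) (0 : ℂ) (0 : ℂ) (0 : ℂ) (by norm_num) (by norm_num) (by norm_num)
  have hz11 : coeff (Finsupp.single 1 1 + Finsupp.single 1 1) f = 0 := by linear_combination (1/3 : ℂ) * hq0_0 + (-1/48 : ℂ) * hq0_1 + (1 : ℂ) * hq0_2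
  have hz12 : coeff (Finsupp.single 1 1 + Finsupp.single 2 1) f = 0 := by linear_combination (-1/48 : ℂ) * hq0_1 + (7/6 : ℂ) * hq0_2 + (1/12 : ℂ) * hq0_3 + (1/12 : ℂ) * hq0_4 + (-3/2 : ℂ) * hq0_5
  have hz13 : coeff (Finsupp.single 1 1 + Finsupp.single 3 1) f = 0 := by linear_combination (1/2 : ℂ) * hq0_0 + (-1/48 : ℂ) * hq0_1 + (2/3 : ℂ) * hq0_2 + (1/12 : ℂ) * hq0_3 + (1/12 : ℂ) * hq0_4 + (-3/2 : ℂ) * hq0_5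
  have hz22 : coeff (Finsupp.single 2 1 + Finsupp.single 2 1) f = 0 := by linear_combination (1/6 : ℂ) * hq0_2 + (1/12 : ℂ) * hq0_4 + (-1/2 : ℂ) * hq0_5
  have hz23 : coeff (Finsupp.single 2 1 + Finsupp.single 3 1) f = 0 := by linear_combination (-1/48 : ℂ) * hq0_1 + (2/3 : ℂ) * hq0_2 + (1/12 : ℂ) * hq0_3 + (1/12 : ℂ) * hq0_4 + (-1 : ℂ) * hq0_5
  have hz33 : coeff (Finsupp.single 3 1 + Finsupp.single 3 1) f = 0 := by linear_combination (1/6 : ℂ) * hq0_0 + (1/12 : ℂ) * hq0_3 + (-1/2 : ℂ) * hq0_5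
  have hq1_0 := key f hev hmem (-1 : ℂ) (0 : ℂ) (1 : ℂ) (-1 : ℂ) (0 : ℂ) (1 : ℂ) (0 : ℂ) (0 : ℂ) (by norm_num) (by norm_num) (by norm_num)
  have hq1_1 := key f hev hmem (2 : ℂ) (0 : ℂ) (-1 : ℂ) (-2 : ℂ) (0 : ℂ) (4 : ℂ) (0 : ℂ) (0 : ℂ) (by norm_num) (by norm_num) (by norm_num)
  have hq1_2 := key f hev hmem (-2 : ℂ) (0 : ℂ) (-1 : ℂ) (1 : ℂ) (0 : ℂ) (2 : ℂ) (0 : ℂ) (0 : ℂ) (by norm_num) (by norm_num) (by norm_num)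
  have hq1_3 := key f hev hmem (-1 : ℂ) (0 : ℂ) (-2 : ℂ) (-1 : ℂ) (0 : ℂ) (-2 : ℂ) (0 : ℂ) (0 : ℂ) (by norm_num) (by norm_num) (by norm_num)
  have hq1_4 := key f hev hmem (1 : ℂ) (0 : ℂ) (1 : ℂ) (3 : ℂ) (0 : ℂ) (3 : ℂ) (0 : ℂ) (0 : ℂ) (by norm_num) (by norm_num) (by norm_num)
  have hq1_5 := key f hev hmem (1 : ℂ) (0 : ℂ) (-1 : ℂ) (-1 : ℂ) (0 : ℂ) (1 : ℂ) (0 : ℂ) (0 : ℂ) (by norm_num) (by norm_num) (by norm_num)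
  have hz14 : coeff (Finsupp.single 1 1 + Finsupp.single 4 1) f = 0 := by linear_combination (1/3 : ℂ) * hq1_0 + (3/32 : ℂ) * hq1_1 + (-1/6 : ℂ) * hq1_2 + (5/24 : ℂ) * hq1_3 + (-1/36 : ℂ) * hq1_4 + (-17/4 : ℂ) * hq1_5
  have hz15 : coeff (Finsupp.single 1 1 + Finsupp.single 5 1) f = 0 := by linear_combination (-13/6 : ℂ) * hq1_0 + (-13/32 : ℂ) * hq1_1 + (5/6 : ℂ) * hq1_2 + (-19/24 : ℂ) * hq1_3 + (5/36 : ℂ) * hq1_4 + (67/4 : ℂ) * hq1_5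
  have hz44 : coeff (Finsupp.single 4 1 + Finsupp.single 4 1) f = 0 := by linear_combination (2 : ℂ) * hq1_0 + (5/16 : ℂ) * hq1_1 + (-2/3 : ℂ) * hq1_2 + (2/3 : ℂ) * hq1_3 + (-1/9 : ℂ) * hq1_4 + (-13 : ℂ) * hq1_5
  have hz45 : coeff (Finsupp.single 4 1 + Finsupp.single 5 1) f = 0 := by linear_combination (-8/3 : ℂ) * hq1_0 + (-13/32 : ℂ) * hq1_1 + (5/6 : ℂ) * hq1_2 + (-19/24 : ℂ) * hq1_3 + (5/36 : ℂ) * hq1_4 + (69/4 : ℂ) * hq1_5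
  have hz55 : coeff (Finsupp.single 5 1 + Finsupp.single 5 1) f = 0 := by linear_combination (5/3 : ℂ) * hq1_0 + (9/32 : ℂ) * hq1_1 + (-7/12 : ℂ) * hq1_2 + (13/24 : ℂ) * hq1_3 + (-1/12 : ℂ) * hq1_4 + (-47/4 : ℂ) * hq1_5
  have hq2_0 := key f hev hmem (-1 : ℂ) (1 : ℂ) (0 : ℂ) (-2 : ℂ) (0 : ℂ) (0 : ℂ) (2 : ℂ) (0 : ℂ) (by norm_num) (by norm_num) (by norm_num)
  have hq2_1 := key f hev hmem (1 : ℂ) (2 : ℂ) (0 : ℂ) (-1 : ℂ) (0 : ℂ) (0 : ℂ) (-2 : ℂ) (0 : ℂ) (by norm_num) (by norm_num) (by norm_num)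
  have hq2_2 := key f hev hmem (-1 : ℂ) (2 : ℂ) (0 : ℂ) (-2 : ℂ) (0 : ℂ) (0 : ℂ) (4 : ℂ) (0 : ℂ) (by norm_num) (by norm_num) (by norm_num)
  have hq2_3 := key f hev hmem (1 : ℂ) (2 : ℂ) (0 : ℂ) (-2 : ℂ) (0 : ℂ) (0 : ℂ) (-4 : ℂ) (0 : ℂ) (by norm_num) (by norm_num) (by norm_num)
  have hq2_4 := key f hev hmem (2 : ℂ) (-1 : ℂ) (0 : ℂ) (-1 : ℂ) (0 : ℂ) (0 : ℂ) (2 : ℂ) (0 : ℂ) (by norm_num) (by norm_num) (by norm_num)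
  have hq2_5 := key f hev hmem (3 : ℂ) (-1 : ℂ) (0 : ℂ) (-2 : ℂ) (0 : ℂ) (0 : ℂ) (6 : ℂ) (0 : ℂ) (by norm_num) (by norm_num) (by norm_num)
  have hz24 : coeff (Finsupp.single 2 1 + Finsupp.single 4 1) f = 0 := by linear_combination (5/8 : ℂ) * hq2_0 + (-1/2 : ℂ) * hq2_1 + (-7/32 : ℂ) * hq2_2 + (7/32 : ℂ) * hq2_3 + (5/2 : ℂ) * hq2_4 + (-1/8 : ℂ) * hq2_5
  have hz26 : coeff (Finsupp.single 2 1 + Finsupp.single 6 1) f = 0 := by linear_combination (5/8 : ℂ) * hq2_0 + (-1/2 : ℂ) * hq2_1 + (-13/64 : ℂ) * hq2_2 + (13/64 : ℂ) * hq2_3 + (5/2 : ℂ) * hq2_4 + (-1/8 : ℂ) * hq2_5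
  have hz46 : coeff (Finsupp.single 4 1 + Finsupp.single 6 1) f = 0 := by linear_combination (-5/2 : ℂ) * hq2_0 + (11/4 : ℂ) * hq2_1 + (59/64 : ℂ) * hq2_2 + (-67/64 : ℂ) * hq2_3 + (-47/4 : ℂ) * hq2_4 + (7/12 : ℂ) * hq2_5
  have hz66 : coeff (Finsupp.single 6 1 + Finsupp.single 6 1) f = 0 := by linear_combination (-35/24 : ℂ) * hq2_0 + (19/12 : ℂ) * hq2_1 + (35/64 : ℂ) * hq2_2 + (-39/64 : ℂ) * hq2_3 + (-7 : ℂ) * hq2_4 + (25/72 : ℂ) * hq2_5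
  have hq3_0 := key f hev hmem (3 : ℂ) (-2 : ℂ) (-1 : ℂ) (0 : ℂ) (0 : ℂ) (0 : ℂ) (0 : ℂ) (6 : ℂ) (by norm_num) (by norm_num) (by norm_num)
  have hq3_1 := key f hev hmem (3 : ℂ) (1 : ℂ) (1 : ℂ) (0 : ℂ) (0 : ℂ) (0 : ℂ) (0 : ℂ) (3 : ℂ) (by norm_num) (by norm_num) (by norm_num)
  have hq3_2 := key f hev hmem (-1 : ℂ) (1 : ℂ) (1 : ℂ) (0 : ℂ) (0 : ℂ) (0 : ℂ) (0 : ℂ) (-1 : ℂ) (by norm_num) (by norm_num) (by norm_num)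
  have hq3_3 := key f hev hmem (2 : ℂ) (1 : ℂ) (1 : ℂ) (0 : ℂ) (0 : ℂ) (0 : ℂ) (0 : ℂ) (2 : ℂ) (by norm_num) (by norm_num) (by norm_num)
  have hq3_4 := key f hev hmem (-1 : ℂ) (3 : ℂ) (1 : ℂ) (0 : ℂ) (0 : ℂ) (0 : ℂ) (0 : ℂ) (-3 : ℂ) (by norm_num) (by norm_num) (by norm_num)
  have hq3_5 := key f hev hmem (-2 : ℂ) (2 : ℂ) (1 : ℂ) (0 : ℂ) (0 : ℂ) (0 : ℂ) (0 : ℂ) (-4 : ℂ) (by norm_num) (by norm_num) (by norm_num)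
  have hz35 : coeff (Finsupp.single 3 1 + Finsupp.single 5 1) f = 0 := by linear_combination (-1/36 : ℂ) * hq3_0 + (1/6 : ℂ) * hq3_1 + (5/6 : ℂ) * hq3_2 + (-7/12 : ℂ) * hq3_3 + (1/16 : ℂ) * hq3_5
  have hz36 : coeff (Finsupp.single 3 1 + Finsupp.single 6 1) f = 0 := by linear_combination (1/36 : ℂ) * hq3_0 + (-7/36 : ℂ) * hq3_1 + (-5/4 : ℂ) * hq3_2 + (3/4 : ℂ) * hq3_3 + (-1/16 : ℂ) * hq3_5
  have hz56 : coeff (Finsupp.single 5 1 + Finsupp.single 6 1) f = 0 := by linear_combination (-5/36 : ℂ) * hq3_0 + (7/18 : ℂ) * hq3_1 + (-1 : ℂ) * hq3_2 + (-5/4 : ℂ) * hq3_3 + (-1/6 : ℂ) * hq3_4 + (9/16 : ℂ) * hq3_5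
  have hg_0 := key f hev hmem (-1 : ℂ) (-2 : ℂ) (2 : ℂ) (1 : ℂ) (-4 : ℂ) (-2 : ℂ) (2 : ℂ) (4 : ℂ) (by norm_num) (by norm_num) (by norm_num)
  have hg_1 := key f hev hmem (-1 : ℂ) (-1 : ℂ) (1 : ℂ) (1 : ℂ) (-1 : ℂ) (-1 : ℂ) (1 : ℂ) (1 : ℂ) (by norm_num) (by norm_num) (by norm_num)
  have hg_2 := key f hev hmem (1 : ℂ) (1 : ℂ) (1 : ℂ) (-2 : ℂ) (-2 : ℂ) (-2 : ℂ) (-2 : ℂ) (1 : ℂ) (by norm_num) (by norm_num) (by norm_num)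
  have hg_3 := key f hev hmem (-1 : ℂ) (1 : ℂ) (-1 : ℂ) (2 : ℂ) (-2 : ℂ) (2 : ℂ) (-2 : ℂ) (1 : ℂ) (by norm_num) (by norm_num) (by norm_num)
  have hg_4 := key f hev hmem (2 : ℂ) (-1 : ℂ) (2 : ℂ) (1 : ℂ) (-2 : ℂ) (4 : ℂ) (-2 : ℂ) (-4 : ℂ) (by norm_num) (by norm_num) (by norm_num)
  have hg_5 := key f hev hmem (-1 : ℂ) (-2 : ℂ) (1 : ℂ) (2 : ℂ) (-4 : ℂ) (-2 : ℂ) (4 : ℂ) (2 : ℂ) (by norm_num) (by norm_num) (by norm_num)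
  have hg_6 := key f hev hmem (-2 : ℂ) (2 : ℂ) (-1 : ℂ) (-2 : ℂ) (4 : ℂ) (-4 : ℂ) (8 : ℂ) (4 : ℂ) (by norm_num) (by norm_num) (by norm_num)
  have hg_7 := key f hev hmem (2 : ℂ) (2 : ℂ) (1 : ℂ) (-1 : ℂ) (-2 : ℂ) (-2 : ℂ) (-4 : ℂ) (4 : ℂ) (by norm_num) (by norm_num) (by norm_num)
  have hg_8 := key f hev hmem (-1 : ℂ) (1 : ℂ) (1 : ℂ) (1 : ℂ) (1 : ℂ) (-1 : ℂ) (-1 : ℂ) (-1 : ℂ) (by norm_num) (by norm_num) (by norm_num)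
  have hg_9 := key f hev hmem (1 : ℂ) (-1 : ℂ) (2 : ℂ) (-1 : ℂ) (2 : ℂ) (-2 : ℂ) (1 : ℂ) (-2 : ℂ) (by norm_num) (by norm_num) (by norm_num)
  have hz00 : coeff (Finsupp.single 0 1 + Finsupp.single 0 1) f = 0 := by linear_combination (-1/2 : ℂ) * hg_0 + (61/2 : ℂ) * hg_1 + (-5/2 : ℂ) * hg_2 + (-5/2 : ℂ) * hg_3 + (-5/8 : ℂ) * hg_4 + (-9/8 : ℂ) * hg_5 + (1/8 : ℂ) * hg_6 + (1/2 : ℂ) * hg_7 + (5/18 : ℂ) * hg_8 + (23/9 : ℂ) * hg_9 + (77 : ℂ) * hz11 + (-18 : ℂ) * hz12 + (-63 : ℂ) * hz13 + (-18 : ℂ) * hz14 + (-18 : ℂ) * hz15 + (-45 : ℂ) * hz22 + (18 : ℂ) * hz23 + (23 : ℂ) * hz24 + (-13 : ℂ) * hz26 + (86 : ℂ) * hz33 + (-18 : ℂ) * hz35 + (27 : ℂ) * hz36 + (18 : ℂ) * hz45 + (-68 : ℂ) * hz46 + (41 : ℂ) * hz55 + (-18 : ℂ) * hz56 + (81 :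 ℂ) * hz66
  have hz01 : coeff (Finsupp.single 0 1 + Finsupp.single 1 1) f = 0 := by linear_combination (-1/4 : ℂ) * hg_0 + (61/4 : ℂ) * hg_1 + (-5/4 : ℂ) * hg_2 + (5/4 : ℂ) * hg_3 + (-5/16 : ℂ) * hg_4 + (-9/16 : ℂ) * hg_5 + (5/64 : ℂ) * hg_6 + (1/4 : ℂ) * hg_7 + (-5/4 : ℂ) * hg_8 + (-5/4 : ℂ) * hg_9 + (81/2 : ℂ) * hz11 + (-9 : ℂ) * hz12 + (-63/2 : ℂ) * hz13 + (-9 : ℂ) * hz14 + (-9 : ℂ) * hz15 + (9 : ℂ) * hz23 + (-11 : ℂ) * hz24 + (-63/2 : ℂ) * hz26 + (45/2 : ℂ) * hz33 + (23/2 : ℂ) * hz35 + (-9 : ℂ) * hz36 + (45/2 : ℂ) * hz44 + (9 : ℂ) * hz45 + (-9 : ℂ) * hz46 + (27/2 : ℂ) * hz56 + (81/2 : ℂ) * hz66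
  have hz02 : coeff (Finsupp.single 0 1 + Finsupp.single 2 1) f = 0 := by linear_combination (1/4 : ℂ) * hg_0 + (-4 : ℂ) * hg_1 + (1 : ℂ) * hg_2 + (1 : ℂ) * hg_3 + (-5/16 : ℂ) * hg_4 + (-1/16 : ℂ) * hg_5 + (3/32 : ℂ) * hg_6 + (-1/4 : ℂ) * hg_7 + (-1 : ℂ) * hg_9 + (9/2 : ℂ) * hz11 + (9 : ℂ) * hz12 + (-27/2 : ℂ) * hz13 + (7 : ℂ) * hz14 + (9 : ℂ) * hz15 + (-9/2 : ℂ) * hz22 + (-9 : ℂ) * hz23 + (27/2 : ℂ) * hz24 + (-27/2 : ℂ) * hz26 + (9/2 : ℂ) * hz33 + (9 : ℂ) * hz35 + (-11 : ℂ) * hz36 + (18 : ℂ) * hz44 + (-9 : ℂ) * hz45 + (9 : ℂ) * hz46 + (-18 : ℂ) * hz55 + (9 : ℂ) * hz56 + (-18 : ℂ) * hz66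
  have hz03 : coeff (Finsupp.single 0 1 + Finsupp.single 3 1) f = 0 := by linear_combination (-1/4 : ℂ) * hg_0 + (14 : ℂ) * hg_1 + (-5/4 : ℂ) * hg_2 + (-5/4 : ℂ) * hg_3 + (-1/4 : ℂ) * hg_4 + (-1/2 : ℂ) * hg_5 + (3/64 : ℂ) * hg_6 + (1/4 : ℂ) * hg_7 + (5/4 : ℂ) * hg_9 + (36 : ℂ) * hz11 + (-9 : ℂ) * hz12 + (-27 : ℂ) * hz13 + (-9 : ℂ) * hz14 + (-11 : ℂ) * hz15 + (-18 : ℂ) * hz22 + (9 : ℂ) * hz23 + (9 : ℂ) * hz24 + (-13/2 : ℂ) * hz26 + (81/2 : ℂ) * hz33 + (-9 : ℂ) * hz35 + (27/2 : ℂ) * hz36 + (9 : ℂ) * hz45 + (-63/2 : ℂ) * hz46 + (45/2 : ℂ) * hz55 + (-9 : ℂ) * hz56 + (81/2 : ℂ) * hz66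
  have hz04 : coeff (Finsupp.single 0 1 + Finsupp.single 4 1) f = 0 := by linear_combination (1/4 : ℂ) * hg_0 + (-4 : ℂ) * hg_1 + (1 : ℂ) * hg_2 + (-1 : ℂ) * hg_3 + (-5/16 : ℂ) * hg_4 + (-1/16 : ℂ) * hg_5 + (5/64 : ℂ) * hg_6 + (-1/4 : ℂ) * hg_7 + (10/9 : ℂ) * hg_8 + (35/36 : ℂ) * hg_9 + (9/2 : ℂ) * hz11 + (7 : ℂ) * hz12 + (-27/2 : ℂ) * hz13 + (9 : ℂ) * hz14 + (9 : ℂ) * hz15 + (-20 : ℂ) * hz22 + (-9 : ℂ) * hz23 + (29 : ℂ) * hz24 + (13/2 : ℂ) * hz26 + (45/2 : ℂ) * hz33 + (-9 : ℂ) * hz35 + (9 : ℂ) * hz36 + (5/2 : ℂ) * hz44 + (-9 : ℂ) * hz45 + (-11 : ℂ) * hz46 + (-11 : ℂ) * hz56 + (-31/2 : ℂ) * hz66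
  have hz05 : coeff (Finsupp.single 0 1 + Finsupp.single 5 1) f = 0 := by linear_combination (-1/4 : ℂ) * hg_0 + (14 : ℂ) * hg_1 + (-5/4 : ℂ) * hg_2 + (5/4 : ℂ) * hg_3 + (-1/4 : ℂ) * hg_4 + (-1/2 : ℂ) * hg_5 + (1/16 : ℂ) * hg_6 + (1/4 : ℂ) * hg_7 + (-10/9 : ℂ) * hg_8 + (-11/9 : ℂ) * hg_9 + (36 : ℂ) * hz11 + (-9 : ℂ) * hz12 + (-29 : ℂ) * hz13 + (-9 : ℂ) * hz14 + (-9 : ℂ) * hz15 + (2 : ℂ) * hz22 + (9 : ℂ) * hz23 + (-11 : ℂ) * hz24 + (-29 : ℂ) * hz26 + (18 : ℂ) * hz33 + (27/2 : ℂ) * hz35 + (-9 : ℂ) * hz36 + (20 : ℂ) * hz44 + (9 : ℂ) * hz45 + (-9 : ℂ) * hz46 + (27/2 : ℂ) * hz56 + (38 : ℂ) * hz66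
  have hz06 : coeff (Finsupp.single 0 1 + Finsupp.single 6 1) f = 0 := by linear_combination (1/4 : ℂ) * hg_0 + (-5 : ℂ) * hg_1 + (1 : ℂ) * hg_2 + (1 : ℂ) * hg_3 + (-1/4 : ℂ) * hg_4 + (5/64 : ℂ) * hg_6 + (-1/4 : ℂ) * hg_7 + (1/9 : ℂ) * hg_8 + (-37/36 : ℂ) * hg_9 + (9 : ℂ) * hz12 + (-9 : ℂ) * hz13 + (9 : ℂ) * hz14 + (9 : ℂ) * hz15 + (-2 : ℂ) * hz22 + (-11 : ℂ) * hz23 + (11 : ℂ) * hz24 + (-23/2 : ℂ) * hz26 + (9 : ℂ) * hz35 + (-9 : ℂ) * hz36 + (16 : ℂ) * hz44 + (-11 : ℂ) * hz45 + (23/2 : ℂ) * hz46 + (-18 : ℂ) * hz55 + (9 : ℂ) * hz56 + (-20 : ℂ) * hz66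
  have hz16 : coeff (Finsupp.single 1 1 + Finsupp.single 6 1) f = 0 := by linear_combination (-7/72 : ℂ) * hg_0 + (3/2 : ℂ) * hg_1 + (-1/2 : ℂ) * hg_2 + (-1/2 : ℂ) * hg_3 + (1/8 : ℂ) * hg_4 + (1/36 : ℂ) * hg_5 + (-11/288 : ℂ) * hg_6 + (1/8 : ℂ) * hg_7 + (1/162 : ℂ) * hg_8 + (83/162 : ℂ) * hg_9 + (-2 : ℂ) * hz11 + (-7/2 : ℂ) * hz12 + (11/2 : ℂ) * hz13 + (-7/2 : ℂ) * hz14 + (-7/2 : ℂ) * hz15 + (-1/9 : ℂ) * hz22 + (9/2 : ℂ) * hz23 + (-97/18 : ℂ) * hz24 + (119/18 : ℂ) * hz26 + (-1 : ℂ) * hz33 + (-9/2 : ℂ) * hz35 + (11/2 : ℂ) * hz36 + (-82/9 : ℂ) * hz44 + (9/2 : ℂ) * hz45 + (-83/18 : ℂ) * hz46 + (8 : ℂ) * hz55 + (-7/2 : ℂ) * hz56 + (71/9 : ℂ) * hz66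
  have hz25 : coeff (Finsupp.single 2 1 + Finsupp.single 5 1) f = 0 := by linear_combination (1/8 : ℂ) * hg_0 + (-2 : ℂ) * hg_1 + (1/2 : ℂ) * hg_2 + (1/2 : ℂ) * hg_3 + (-1/8 : ℂ) * hg_4 + (-1/36 : ℂ) * hg_5 + (11/288 : ℂ) * hg_6 + (-1/8 : ℂ) * hg_7 + (-1/2 : ℂ) * hg_9 + (1 : ℂ) * hz11 + (9/2 : ℂ) * hz12 + (-11/2 : ℂ) * hz13 + (7/2 : ℂ) * hz14 + (9/2 : ℂ) * hz15 + (-1 : ℂ) * hz22 + (-9/2 : ℂ) * hz23 + (11/2 : ℂ) * hz24 + (-11/2 : ℂ) * hz26 + (1 : ℂ) * hz33 + (9/2 : ℂ) * hz35 + (-11/2 : ℂ) * hz36 + (9 : ℂ) * hz44 + (-9/2 : ℂ) * hz45 + (9/2 : ℂ) * hz46 + (-9 : ℂ) * hz55 + (9/2 : ℂ) * hz56 + (-9 : ℂ) * hz66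
  have hz34 : coeff (Finsupp.single 3 1 + Finsupp.single 4 1) f = 0 := by linear_combination (7/72 : ℂ) * hg_0 + (-2 : ℂ) * hg_1 + (1/2 : ℂ) * hg_2 + (-1/2 : ℂ) * hg_3 + (-1/8 : ℂ) * hg_4 + (1/32 : ℂ) * hg_6 + (-1/8 : ℂ) * hg_7 + (40/81 : ℂ) * hg_8 + (79/162 : ℂ) * hg_9 + (1 : ℂ) * hz11 + (7/2 : ℂ) * hz12 + (-9/2 : ℂ) * hz13 + (9/2 : ℂ) * hz14 + (7/2 : ℂ) * hz15 + (-71/9 : ℂ) * hz22 + (-9/2 : ℂ) * hz23 + (241/18 : ℂ) * hz24 + (61/18 : ℂ) * hz26 + (9 : ℂ) * hz33 + (-9/2 : ℂ) * hz35 + (9/2 : ℂ) * hz36 + (1/9 : ℂ) * hz44 + (-9/2 : ℂ) * hz45 + (-79/18 : ℂ) * hz46 + (1 : ℂ) * hz55 + (-11/2 : ℂ) * hz56 + (-71/9 : ℂ) * hz66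
  have hall : ∀ i j : Fin 7, coeff (Finsupp.single i 1 + Finsupp.single j 1) f = 0 := by
    intro i j
    rcases i with ⟨iv, hiv⟩
    rcases j with ⟨jv, hjv⟩
    interval_cases iv <;> interval_cases jv
    · exact hz00
    · exact hz01
    · exact hz02
    · exact hz03
    · exact hz04
    · exact hz05
    · exact hz06
    · rw [add_comm]; exact hz01
    · exact hz11
    · exact hz12
    · exact hz13
    · exact hz14
    · exact hz15
    · exact hz16
    · rw [add_comm]; exact hz02
    · rw [add_comm]; exact hz12
    · exact hz22
    · exact hz23
    · exact hz24
    · exact hz25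
    · exact hz26
    · rw [add_comm]; exact hz03
    · rw [add_comm]; exact hz13
    · rw [add_comm]; exact hz23
    · exact hz33
    · exact hz34
    · exact hz35
    · exact hz36
    · rw [add_comm]; exact hz04
    · rw [add_comm]; exact hz14
    · rw [add_comm]; exact hz24
    · rw [add_comm]; exact hz34
    · exact hz44
    · exact hz45
    · exact hz46
    · rw [add_comm]; exact hz05
    · rw [add_comm]; exact hz15
    · rw [add_comm]; exact hz25
    · rw [add_comm]; exact hz35
    · rw [add_comm]; exact hz45
    · exact hz55
    · exact hz56
    · rw [add_comm]; exact hz06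
    · rw [add_comm]; exact hz16
    · rw [add_comm]; exact hz26
    · rw [add_comm]; exact hz36
    · rw [add_comm]; exact hz46
    · rw [add_comm]; exact hz56
    · exact hz66
  rw [master f hhom]
  apply Finset.sum_eq_zero
  intro p _
  rw [hall p.1 p.2, map_zero, zero_mul]
end

section
/- Let ψ : ℂ[w₀,…,w₆] → A be as follows: A is the quotient of ℂ[x₀,x₁,x₂,x₃,y₀,y₁,y₂,y₃] by the ideal generated by x₀y₀−7x₁y₁+4x₂y₂+2x₃y₃, x₀y₀−6x₁y₁+2x₂y₂+3x₃y₃, x₀y₀−x₁y₁−7x₂y₂+7x₃y₃, and ψ sends w₀ ↦ x₃y₃, w₁ ↦ x₀y₁+x₁y₀, w₂ ↦ x₀y₂+x₂y₀, w₃ ↦ x₀y₃+x₃y₀, w₄ ↦ x₁y₂+x₂y₁, w₅ ↦ x₁y₃+x₃y₁, w₆ ↦ x₂y₃+x₃y₂. Consider the eight points of ℂ⁷: P₁=(1,2,2,2,2,2,2), P₂=(1,−2,−2,−2,2,2,2), P₃=(1,−2,2,2,−2,−2,2), P₄=(1,2,−2,−2,−2,−2,2), P₅=(1,2,−2,2,−2,2,−2),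 P₆=(1,−2,2,−2,−2,2,−2), P₇=(1,−2,−2,2,2,−2,−2), P₈=(1,2,2,−2,2,−2,−2). Then for every pair of indices 1 ≤ i < j ≤ 8, every polynomial f in the kernel of ψ, and all s,t ∈ ℂ, the evaluation of f at the point s·P_i + t·P_j ∈ ℂ⁷ is 0 (i.e., every line joining two of the eight singular points of W_{BS}⁶ is contained in W_{BS}⁶). -/
set_option maxHeartbeats 1000000

open MvPolynomial

/-- The eight singular points P₁,…,P₈ of W_{BS}⁶ (affine representatives in ℂ⁷). -/
noncomputable def Pt : Fin 8 → Fin 7 → ℂ :=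
  ![![1, 2, 2, 2, 2, 2, 2], ![1, -2, -2, -2, 2, 2, 2],
    ![1, -2, 2, 2, -2, -2, 2], ![1, 2, -2, -2, -2, -2, 2],
    ![1, 2, -2, 2, -2, 2, -2], ![1, -2, 2, -2, -2, 2, -2],
    ![1, -2, -2, 2, 2, -2, -2], ![1, 2, 2, -2, 2, -2, -2]]

namespace WBS6Aux

open Matrix

@[simp] lemma cons_val_five {α} {m : ℕ} (x : α) (u : Fin (m + 5) → α) :
    vecCons x u 5 = vecHead (vecTail (vecTail (vecTail (vecTail u)))) := rfl

@[simp] lemma cons_val_six {α} {m : ℕ} (x : α) (u : Fin (m + 6) → α) :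
    vecCons x u 6 = vecHead (vecTail (vecTail (vecTail (vecTail (vecTail u))))) := rfl

@[simp] lemma cons_val_seven {α} {m : ℕ} (x : α) (u : Fin (m + 7) → α) :
    vecCons x u 7 =
      vecHead (vecTail (vecTail (vecTail (vecTail (vecTail (vecTail u)))))) := rfl

/-- The sign vectors giving the eight singular points. -/
noncomputable def Ev : Fin 8 → Fin 4 → ℂ :=
  ![![1, 1, 1, 1], ![-1, 1, 1, 1], ![1, -1, 1, 1], ![1, 1, -1, -1],
    ![1, 1, -1, 1], ![1, -1, 1, -1], ![1, -1, -1, 1], ![1, 1, 1, -1]]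

/-- The image of the diagonal point (ε, ε) under the seven quadrics. -/
noncomputable def Qv (ε : Fin 4 → ℂ) : Fin 7 → ℂ :=
  ![ε 3 * ε 3, ε 0 * ε 1 + ε 1 * ε 0, ε 0 * ε 2 + ε 2 * ε 0, ε 0 * ε 3 + ε 3 * ε 0,
    ε 1 * ε 2 + ε 2 * ε 1, ε 1 * ε 3 + ε 3 * ε 1, ε 2 * ε 3 + ε 3 * ε 2]

lemma key (s t a b c d : ℂ) (ε ε' : Fin 4 → ℂ)
    (hε : ∀ k, ε k * ε k = 1) (hε' : ∀ k, ε' k * ε' k = 1)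
    (h1 : a * c = s) (h2 : b * d = t) (h3 : a * d + b * c = 0) :
    ∀ f ∈ RingHom.ker psi, eval (s • Qv ε + t • Qv ε') f = 0 := by
  intro f hf
  set p : Fin 8 → ℂ :=
    ![a * ε 0 + b * ε' 0, a * ε 1 + b * ε' 1, a * ε 2 + b * ε' 2, a * ε 3 + b * ε' 3,
      c * ε 0 + d * ε' 0, c * ε 1 + d * ε' 1, c * ε 2 + d * ε' 2, c * ε 3 + d * ε' 3]
    with hp
  have h0 : p 0 = a * ε 0 + b * ε' 0 := rfl
  have h1' : p 1 = a * ε 1 + b * ε' 1 := rfl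
  have h2' : p 2 = a * ε 2 + b * ε' 2 := rfl
  have h3' : p 3 = a * ε 3 + b * ε' 3 := rfl
  have h4 : p 4 = c * ε 0 + d * ε' 0 := rfl
  have h5 : p 5 = c * ε 1 + d * ε' 1 := rfl
  have h6 : p 6 = c * ε 2 + d * ε' 2 := rfl
  have h7 : p 7 = c * ε 3 + d * ε' 3 := rfl
  have e0 := hε 0; have e1 := hε 1; have e2 := hε 2; have e3 := hε 3
  have e0' := hε' 0; have e1' := hε' 1; have e2' := hε' 2; have e3' := hε' 3
  have hI : ∀ g ∈ I6, aeval p g = 0 := by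
    intro g hg
    refine (Ideal.span_le.mpr ?_ : I6 ≤ RingHom.ker (aeval p : MvPolynomial (Fin 8) ℂ →ₐ[ℂ] ℂ)) hg
    intro g hg
    simp only [Set.mem_insert_iff, Set.mem_singleton_iff] at hg
    rcases hg with rfl | rfl | rfl <;>
      simp only [SetLike.mem_coe, RingHom.mem_ker, AlgHom.toRingHom_eq_coe,
        RingHom.coe_coe, _root_.map_add, _root_.map_sub, _root_.map_mul, _root_.map_ofNat, aeval_X,
        h0, h1', h2', h3', h4, h5, h6, h7]
    · linear_combination (a * c) * e0 - 7 * (a * c) * e1 + 4 * (a * c) * e2 + 2 * (a * c) * e3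
        + (b * d) * e0' - 7 * (b * d) * e1' + 4 * (b * d) * e2' + 2 * (b * d) * e3'
        + (ε 0 * ε' 0 - 7 * (ε 1 * ε' 1) + 4 * (ε 2 * ε' 2) + 2 * (ε 3 * ε' 3)) * h3
    · linear_combination (a * c) * e0 - 6 * (a * c) * e1 + 2 * (a * c) * e2 + 3 * (a * c) * e3
        + (b * d) * e0' - 6 * (b * d) * e1' + 2 * (b * d) * e2' + 3 * (b * d) * e3'
        + (ε 0 * ε' 0 - 6 * (ε 1 * ε' 1) + 2 * (ε 2 * ε' 2) + 3 * (ε 3 * ε' 3)) * h3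
    · linear_combination (a * c) * e0 - (a * c) * e1 - 7 * (a * c) * e2 + 7 * (a * c) * e3
        + (b * d) * e0' - (b * d) * e1' - 7 * (b * d) * e2' + 7 * (b * d) * e3'
        + (ε 0 * ε' 0 - ε 1 * ε' 1 - 7 * (ε 2 * ε' 2) + 7 * (ε 3 * ε' 3)) * h3
  let φ : (MvPolynomial (Fin 8) ℂ ⧸ I6) →ₐ[ℂ] ℂ := Ideal.Quotient.liftₐ I6 (aeval p) hI
  have hcomp : φ.comp psi = aeval (s • Qv ε + t • Qv ε') := by
    apply MvPolynomial.algHom_ext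
    intro m
    simp only [AlgHom.comp_apply, psi, aeval_X, φ, Ideal.Quotient.liftₐ_apply,
      Ideal.Quotient.lift_mk, AlgHom.coe_toRingHom, Pi.add_apply, Pi.smul_apply, smul_eq_mul]
    fin_cases m <;>
      simp [Fin.zero_eta, Fin.mk_one, Fin.isValue, Matrix.cons_val_zero,
        Matrix.cons_val_one, Matrix.cons_val_two, Matrix.cons_val_three, Matrix.cons_val_four,
        cons_val_five, cons_val_six, cons_val_seven, Matrix.vecHead, Matrix.vecTail,
        Function.comp_apply, Fin.succ_zero_eq_one, Fin.succ_one_eq_two,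
        _root_.map_add, _root_.map_mul, aeval_X, h0, h1', h2', h3', h4, h5, h6, h7, Qv]
    · linear_combination (ε 3 * ε' 3) * h3 + (a * c - s) * e3 + (b * d - t) * e3' + h1 + h2
    · linear_combination (ε 0 * ε' 1 + ε 1 * ε' 0) * h3
        + (ε 0 * ε 1 + ε 1 * ε 0) * h1 + (ε' 0 * ε' 1 + ε' 1 * ε' 0) * h2
    · linear_combination (ε 0 * ε' 2 + ε 2 * ε' 0) * h3
        + (ε 0 * ε 2 + ε 2 * ε 0) * h1 + (ε' 0 * ε' 2 + ε' 2 * ε' 0) * h2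
    · linear_combination (ε 0 * ε' 3 + ε 3 * ε' 0) * h3
        + (ε 0 * ε 3 + ε 3 * ε 0) * h1 + (ε' 0 * ε' 3 + ε' 3 * ε' 0) * h2
    · linear_combination (ε 1 * ε' 2 + ε 2 * ε' 1) * h3
        + (ε 1 * ε 2 + ε 2 * ε 1) * h1 + (ε' 1 * ε' 2 + ε' 2 * ε' 1) * h2
    · linear_combination (ε 1 * ε' 3 + ε 3 * ε' 1) * h3
        + (ε 1 * ε 3 + ε 3 * ε 1) * h1 + (ε' 1 * ε' 3 + ε' 3 * ε' 1) * h2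
    · linear_combination (ε 2 * ε' 3 + ε 3 * ε' 2) * h3
        + (ε 2 * ε 3 + ε 3 * ε 2) * h1 + (ε' 2 * ε' 3 + ε' 3 * ε' 2) * h2
  have := congrArg (fun g => g f) hcomp
  simp only [AlgHom.comp_apply] at this
  rw [RingHom.mem_ker] at hf
  rw [hf, map_zero] at this
  rw [← MvPolynomial.coe_aeval_eq_eval]
  exact this.symm

end WBS6Aux

open WBS6Aux

/-- Every line joining two of the eight singular points of W_{BS}⁶ is contained in
W_{BS}⁶: every polynomial in ker ψ vanishes on every point of the form s·Pᵢ + t·Pⱼ. -/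
theorem lines_joining_singular_points_of_WBS6 :
    ∀ i j : Fin 8, i < j → ∀ f ∈ RingHom.ker psi, ∀ s t : ℂ,
      eval (s • Pt i + t • Pt j) f = 0 := by
  intro i j hij f hf s t
  have hE : ∀ k m, Ev k m * Ev k m = 1 := by
    intro k m; fin_cases k <;> fin_cases m <;> norm_num [Ev]
  have hPt : ∀ k, Pt k = Qv (Ev k) := by
    intro k; funext m; fin_cases k <;> fin_cases m <;> norm_num [Pt, Qv, Ev, Matrix.cons_val_two, Matrix.cons_val_three, Matrix.vecHead, Matrix.vecTail]
  rw [hPt i, hPt j]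
  rcases eq_or_ne t 0 with rfl | ht
  · exact key s 0 s 0 1 0 (Ev i) (Ev j) (hE i) (hE j) (by ring) (by ring) (by ring) f hf
  rcases eq_or_ne s 0 with rfl | hs
  · exact key 0 t 0 t 0 1 (Ev i) (Ev j) (hE i) (hE j) (by ring) (by ring) (by ring) f hf
  obtain ⟨u, hu⟩ := IsAlgClosed.exists_pow_nat_eq (-(s * t)) (n := 2) (by norm_num)
  have hu0 : u ≠ 0 := by
    intro h
    apply mul_ne_zero hs ht
    have h2 : -(s * t) = 0 := by rw [← hu, h]; ring
    exact neg_eq_zero.mp h2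
  refine key s t s u 1 (t / u) (Ev i) (Ev j) (hE i) (hE j) (by ring) ?_ ?_ f hf
  · field_simp
  · field_simp
    linear_combination hu
end
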